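/- Let 1 < p, p₁, p₂ < ∞ and 1 ≤ q, q₁, q₂ ≤ ∞ satisfy 1/p₂ = 1/p + 1/p₁ and 1/q₂ = 1/q + 1/q₁. Then pointwise multiplication is a bounded bilinear map from L^{p,q} × L^{p₁,q₁} to L^{p₂,q₂} (Hölder's inequality in Lorentz spaces). -/

import Mathlib

/-!
Where `|f g| > f*(t) g*(t')` one has `|f| > f*(t)` or `|g| > g*(t')`, so
`(f g)*(t + t') ≤ f*(t) g*(t')`. With `t = t'`, the weight `(2t)^{1/p₂ - 1/q₂}` splits as
`2^{1/p₂ - 1/q₂} t^{1/p - 1/q} t^{1/p₁ - 1/q₁}`, and the substitution `t ↦ 2t` in the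
`L^{q₂}(0, ∞)` norm costs a factor `2^{1/q₂}`. What remains is Hölder's inequality on `(0, ∞)`
for `t^{1/p - 1/q} f*(t)` and `t^{1/p₁ - 1/q₁} g*(t)` with `1/q₂ = 1/q + 1/q₁`.
-/

open MeasureTheory ENNReal Set

/-- Decreasing rearrangement of `‖f‖` with respect to `μ`. -/
noncomputable def rearrangement {α : Type*} [MeasurableSpace α] (μ : Measure α)
    {E : Type*} [NNNorm E] (f : α → E) (t : ℝ) : ℝ≥0∞ :=
  sInf {s : ℝ≥0∞ | μ {x | s < (‖f x‖₊ : ℝ≥0∞)} ≤ ENNReal.ofReal t}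

/-- Lorentz quasi-norm `‖f‖_{L^{p,q}(μ)} = ‖ t^{1/p-1/q} f*(t) ‖_{L^q((0,∞),dt)}`. -/
noncomputable def lorentzNorm {α : Type*} [MeasurableSpace α] (μ : Measure α)
    {E : Type*} [NNNorm E] (p q : ℝ≥0∞) (f : α → E) : ℝ≥0∞ :=
  if q = ∞ then
    ⨆ t ∈ Ioi (0 : ℝ), ENNReal.ofReal (t ^ (p.toReal⁻¹)) * rearrangement μ f t
  else
    (∫⁻ t in Ioi (0 : ℝ),
        (ENNReal.ofReal (t ^ (p.toReal⁻¹ - q.toReal⁻¹)) * rearrangement μ f t) ^ q.toReal) ^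
      q.toReal⁻¹

lemma ENNReal.toReal_inv_eq_of_inv_eq_add {a b c : ℝ≥0∞} (h : a⁻¹ = b⁻¹ + c⁻¹) (hb : b ≠ 0)
    (hc : c ≠ 0) : a.toReal⁻¹ = b.toReal⁻¹ + c.toReal⁻¹ := by
  rw [← toReal_inv, h, toReal_add (inv_ne_top.2 hb) (inv_ne_top.2 hc), toReal_inv, toReal_inv]

lemma setLIntegral_Ioi_comp_mul_left (h : ℝ → ℝ≥0∞) {c : ℝ} (hc : 0 < c) :
    ∫⁻ t in Ioi 0, h (c * t) = ENNReal.ofReal c⁻¹ * ∫⁻ t in Ioi 0, h t := by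
  let e := (Homeomorph.mulLeft₀ c hc.ne').toMeasurableEquiv
  have hpre : e ⁻¹' Ioi 0 = Ioi 0 := by
    ext t; exact mul_pos_iff_of_pos_left hc
  have hmap : Measure.map e volume = ENNReal.ofReal c⁻¹ • volume := by
    have := Real.map_volume_mul_left hc.ne'
    rwa [abs_of_pos (inv_pos.2 hc)] at this
  calc ∫⁻ t in Ioi 0, h (c * t) = ∫⁻ t in Ioi 0, h t ∂(Measure.map e volume) := by
        rw [e.restrict_map, hpre, lintegral_map_equiv]; rfl
    _ = _ := by rw [hmap, Measure.restrict_smul, lintegral_smul_measure, smul_eq_mul]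

section Rearrangement

variable {α E : Type*} [MeasurableSpace α] {μ : Measure α}

lemma rearrangement_antitone [NNNorm E] (f : α → E) : Antitone (rearrangement μ f) :=
  fun _ _ h => sInf_le_sInf fun _ hs => hs.trans (ENNReal.ofReal_le_ofReal h)

lemma rearrangement_le_of_measure_le [NNNorm E] {f : α → E} {s : ℝ≥0∞} {t : ℝ}
    (h : μ {x | s < (‖f x‖₊ : ℝ≥0∞)} ≤ ENNReal.ofReal t) : rearrangement μ f t ≤ s :=
  sInf_le h

lemma measure_rearrangement_lt_le [NNNorm E] (f : α → E) (t : ℝ) :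
    μ {x | rearrangement μ f t < (‖f x‖₊ : ℝ≥0∞)} ≤ ENNReal.ofReal t := by
  set a := rearrangement μ f t
  rcases eq_top_or_lt_top a with ha | ha
  · simp [ha]
  obtain ⟨u, hu_anti, hu_mem, hu_lim⟩ := exists_seq_strictAnti_tendsto' ha
  have hsup : ∀ n, μ {x | u n < (‖f x‖₊ : ℝ≥0∞)} ≤ ENNReal.ofReal t := fun n => by
    obtain ⟨s, hs, hsu⟩ := sInf_lt_iff.mp (hu_mem n).1
    exact (measure_mono fun x hx => hsu.trans hx).trans hs
  have hunion : {x | a < (‖f x‖₊ : ℝ≥0∞)} = ⋃ n, {x | u n < (‖f x‖₊ : ℝ≥0∞)} := by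
    ext x
    simp only [mem_ofPred_eq, mem_iUnion]
    refine ⟨fun hx => (hu_lim.eventually (gt_mem_nhds hx)).exists, ?_⟩
    rintro ⟨n, hn⟩
    exact (hu_mem n).1.trans hn
  have hmono : Monotone fun n => {x | u n < (‖f x‖₊ : ℝ≥0∞)} :=
    fun m n hmn x hx => (hu_anti.antitone hmn).trans_lt hx
  rw [hunion, hmono.measure_iUnion]
  exact iSup_le hsup

lemma rearrangement_mul_le [NonUnitalSeminormedRing E] (f g : α → E) {t t' : ℝ}
    (ht : 0 ≤ t) (ht' : 0 ≤ t') :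
    rearrangement μ (fun x => f x * g x) (t + t') ≤
      rearrangement μ f t * rearrangement μ g t' := by
  set a := rearrangement μ f t
  set b := rearrangement μ g t'
  apply rearrangement_le_of_measure_le
  have hsub : {x | a * b < (‖f x * g x‖₊ : ℝ≥0∞)} ⊆
      {x | a < (‖f x‖₊ : ℝ≥0∞)} ∪ {x | b < (‖g x‖₊ : ℝ≥0∞)} := by
    intro x hx
    simp only [mem_union, mem_ofPred_eq] at hx ⊢
    contrapose! hx
    calc (‖f x * g x‖₊ : ℝ≥0∞) ≤ ‖f x‖₊ * ‖g x‖₊ := by exact_mod_cast nnnorm_mul_le _ _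
      _ ≤ a * b := mul_le_mul' hx.1 hx.2
  calc μ {x | a * b < (‖f x * g x‖₊ : ℝ≥0∞)}
      ≤ μ {x | a < (‖f x‖₊ : ℝ≥0∞)} + μ {x | b < (‖g x‖₊ : ℝ≥0∞)} :=
        (measure_mono hsub).trans (measure_union_le _ _)
    _ ≤ ENNReal.ofReal t + ENNReal.ofReal t' :=
        add_le_add (measure_rearrangement_lt_le f t) (measure_rearrangement_lt_le g t')
    _ = ENNReal.ofReal (t + t') := (ENNReal.ofReal_add ht ht').symm

end Rearrangement

section Weighted

variable {α E : Type*} [MeasurableSpace α] {μ : Measure α}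

noncomputable def weightedRearrangement [NNNorm E] (μ : Measure α) (a : ℝ) (f : α → E) (t : ℝ) :
    ℝ≥0∞ :=
  ENNReal.ofReal (t ^ a) * rearrangement μ f t

lemma measurable_weightedRearrangement [NNNorm E] (a : ℝ) (f : α → E) :
    Measurable (weightedRearrangement μ a f) :=
  (measurable_id.pow_const a).ennreal_ofReal.mul (rearrangement_antitone f).measurable

lemma weightedRearrangement_mul_le [NonUnitalSeminormedRing E] (f g : α → E) (a b : ℝ) {t : ℝ}
    (ht : 0 < t) :
    weightedRearrangement μ (a + b) (fun x => f x * g x) (2 * t) ≤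
      ENNReal.ofReal (2 ^ (a + b)) *
        (weightedRearrangement μ a f t * weightedRearrangement μ b g t) := by
  have hweight : ENNReal.ofReal ((2 * t) ^ (a + b)) =
      ENNReal.ofReal (2 ^ (a + b)) * (ENNReal.ofReal (t ^ a) * ENNReal.ofReal (t ^ b)) := by
    rw [Real.mul_rpow zero_le_two ht.le, Real.rpow_add ht, ENNReal.ofReal_mul (by positivity),
      ENNReal.ofReal_mul (by positivity)]
  have hrearr := rearrangement_mul_le (μ := μ) f g ht.le ht.le
  rw [← two_mul] at hrearr
  calc weightedRearrangement μ (a + b) (fun x => f x * g x) (2 * t)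
      ≤ ENNReal.ofReal (2 ^ (a + b)) * (ENNReal.ofReal (t ^ a) * ENNReal.ofReal (t ^ b)) *
          (rearrangement μ f t * rearrangement μ g t) := by
        rw [weightedRearrangement, hweight]; gcongr
    _ = _ := by simp only [weightedRearrangement]; ring

end Weighted

/-- At `q = ∞` this is the pointwise supremum, as in `lorentzNorm`, not an essential supremum. -/
noncomputable def ioiNorm (q : ℝ≥0∞) (F : ℝ → ℝ≥0∞) : ℝ≥0∞ :=
  if q = ∞ then ⨆ t ∈ Ioi (0 : ℝ), F t
  else (∫⁻ t in Ioi (0 : ℝ), F t ^ q.toReal) ^ q.toReal⁻¹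

lemma ioiNorm_top (F : ℝ → ℝ≥0∞) : ioiNorm ∞ F = ⨆ t ∈ Ioi (0 : ℝ), F t :=
  if_pos rfl

lemma lorentzNorm_eq_ioiNorm {α E : Type*} [MeasurableSpace α] [NNNorm E] (μ : Measure α)
    (p q : ℝ≥0∞) (f : α → E) :
    lorentzNorm μ p q f = ioiNorm q (weightedRearrangement μ (p.toReal⁻¹ - q.toReal⁻¹) f) := by
  unfold lorentzNorm ioiNorm weightedRearrangement
  split_ifs with hq
  · simp [hq]
  · rfl

lemma ioiNorm_comp_mul_left (q : ℝ≥0∞) (F : ℝ → ℝ≥0∞) {c : ℝ} (hc : 0 < c) :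
    ioiNorm q F = ENNReal.ofReal c ^ q.toReal⁻¹ * ioiNorm q (fun t => F (c * t)) := by
  unfold ioiNorm
  split_ifs with hq
  · rw [hq, toReal_top, _root_.inv_zero, rpow_zero, one_mul, ← iSup_image (f := fun t => c * t),
      image_mul_left_Ioi hc, mul_zero]
  · rw [setLIntegral_Ioi_comp_mul_left (fun t => F t ^ q.toReal) hc,
      ENNReal.mul_rpow_of_nonneg _ _ (by positivity), ← mul_assoc,
      ← ENNReal.mul_rpow_of_nonneg _ _ (by positivity), ← ENNReal.ofReal_mul hc.le,
      mul_inv_cancel₀ hc.ne', ENNReal.ofReal_one, one_rpow, one_mul]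

lemma ioiNorm_le_mul_of_le_mul {q : ℝ≥0∞} (hq : q ≠ 0) {F G : ℝ → ℝ≥0∞} (hG : Measurable G)
    {c : ℝ≥0∞} (h : ∀ t ∈ Ioi (0 : ℝ), F t ≤ c * G t) : ioiNorm q F ≤ c * ioiNorm q G := by
  unfold ioiNorm
  split_ifs with hq_top
  · exact iSup₂_le fun t ht => (h t ht).trans (mul_le_mul_right (le_biSup G ht) c)
  · have hq_pos : 0 < q.toReal := ENNReal.toReal_pos hq hq_top
    calc (∫⁻ t in Ioi 0, F t ^ q.toReal) ^ q.toReal⁻¹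
        ≤ (∫⁻ t in Ioi 0, c ^ q.toReal * G t ^ q.toReal) ^ q.toReal⁻¹ := by
          gcongr ?_ ^ _
          refine setLIntegral_mono' measurableSet_Ioi fun t ht => ?_
          rw [← ENNReal.mul_rpow_of_nonneg _ _ hq_pos.le]
          exact ENNReal.rpow_le_rpow (h t ht) hq_pos.le
      _ = c * (∫⁻ t in Ioi 0, G t ^ q.toReal) ^ q.toReal⁻¹ := by
          rw [lintegral_const_mul _ (hG.pow_const _),
            ENNReal.mul_rpow_of_nonneg _ _ (by positivity), ENNReal.rpow_rpow_inv hq_pos.ne']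

lemma ioiNorm_mul_le {q q₁ r : ℝ≥0∞} (hr : r⁻¹ = q⁻¹ + q₁⁻¹) (hq : q ≠ 0) (hq₁ : q₁ ≠ 0)
    {F G : ℝ → ℝ≥0∞} (hF : Measurable F) (hG : Measurable G) :
    ioiNorm r (F * G) ≤ ioiNorm q F * ioiNorm q₁ G := by
  by_cases hq_top : q = ∞
  · obtain rfl : r = q₁ := by simpa [hq_top] using hr
    rw [hq_top, ioiNorm_top]
    exact ioiNorm_le_mul_of_le_mul hq₁ hG fun t ht => mul_le_mul_left (le_biSup F ht) (G t)
  by_cases hq₁_top : q₁ = ∞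
  · obtain rfl : r = q := by simpa [hq₁_top] using hr
    rw [hq₁_top, ioiNorm_top, mul_comm (ioiNorm r F)]
    exact ioiNorm_le_mul_of_le_mul hq hF fun t ht =>
      (mul_le_mul_right (le_biSup G ht) (F t)).trans_eq (mul_comm _ _)
  have hr_top : r ≠ ∞ := by
    rw [← ENNReal.inv_ne_zero, hr]
    simp [hq_top]
  have hreal := ENNReal.toReal_inv_eq_of_inv_eq_add hr hq hq₁
  have hq_pos : 0 < q.toReal⁻¹ := inv_pos.2 (ENNReal.toReal_pos hq hq_top)
  have hq₁_pos : 0 < q₁.toReal⁻¹ := inv_pos.2 (ENNReal.toReal_pos hq₁ hq₁_top)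
  have hr_pos : 0 < r.toReal := inv_pos.1 (by rw [hreal]; positivity)
  have hrq : r.toReal < q.toReal := (inv_lt_inv₀ (inv_pos.1 hq_pos) hr_pos).1 (by linarith)
  simp only [ioiNorm, if_neg hq_top, if_neg hq₁_top, if_neg hr_top]
  simpa only [one_div] using ENNReal.lintegral_Lp_mul_le_Lq_mul_Lr hr_pos hrq
    (by simpa only [one_div] using hreal) _ hF.aemeasurable hG.aemeasurable

theorem lorentzNorm_mul_holder_general {α : Type*} [MeasurableSpace α] (μ : Measure α)
    (p q p₁ q₁ p₂ q₂ : ℝ≥0∞)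
    (hp : 1 < p) (hp₁ : 1 < p₁)
    (hq : 1 ≤ q) (hq₁ : 1 ≤ q₁)
    (hpc : p₂⁻¹ = p⁻¹ + p₁⁻¹) (hqc : q₂⁻¹ = q⁻¹ + q₁⁻¹) :
    ∃ C : ℝ≥0∞, C < ∞ ∧ ∀ f g : α → ℝ,
      AEStronglyMeasurable f μ → AEStronglyMeasurable g μ →
      lorentzNorm μ p₂ q₂ (fun x => f x * g x) ≤
        C * lorentzNorm μ p q f * lorentzNorm μ p₁ q₁ g := by
  have hq0 : q ≠ 0 := (zero_lt_one.trans_le hq).ne'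
  have hq₁0 : q₁ ≠ 0 := (zero_lt_one.trans_le hq₁).ne'
  have hq₂0 : q₂ ≠ 0 := by
    rw [← ENNReal.inv_ne_top, hqc]
    exact add_ne_top.2 ⟨inv_ne_top.2 hq0, inv_ne_top.2 hq₁0⟩
  set a := p.toReal⁻¹ - q.toReal⁻¹
  set a₁ := p₁.toReal⁻¹ - q₁.toReal⁻¹
  have ha : p₂.toReal⁻¹ - q₂.toReal⁻¹ = a + a₁ := by
    rw [ENNReal.toReal_inv_eq_of_inv_eq_add hpc (zero_lt_one.trans hp).ne'
      (zero_lt_one.trans hp₁).ne', ENNReal.toReal_inv_eq_of_inv_eq_add hqc hq0 hq₁0]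
    ring
  refine ⟨ENNReal.ofReal 2 ^ q₂.toReal⁻¹ * ENNReal.ofReal (2 ^ (a + a₁)), by finiteness,
    fun f g _ _ => ?_⟩
  rw [lorentzNorm_eq_ioiNorm, lorentzNorm_eq_ioiNorm, lorentzNorm_eq_ioiNorm, ha,
    ioiNorm_comp_mul_left _ _ two_pos, mul_assoc, mul_assoc]
  gcongr
  calc ioiNorm q₂ (fun t => weightedRearrangement μ (a + a₁) (fun x => f x * g x) (2 * t))
      ≤ ENNReal.ofReal (2 ^ (a + a₁)) *
          ioiNorm q₂ (weightedRearrangement μ a f * weightedRearrangement μ a₁ g) :=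
        ioiNorm_le_mul_of_le_mul hq₂0
          ((measurable_weightedRearrangement a f).mul (measurable_weightedRearrangement a₁ g))
          fun t ht => weightedRearrangement_mul_le f g a a₁ ht
    _ ≤ ENNReal.ofReal (2 ^ (a + a₁)) *
          (ioiNorm q (weightedRearrangement μ a f) *
            ioiNorm q₁ (weightedRearrangement μ a₁ g)) := by
        gcongr
        exact ioiNorm_mul_le hqc hq0 hq₁0 (measurable_weightedRearrangement a f)
          (measurable_weightedRearrangement a₁ g)

/-- Hölder's inequality in Lorentz spaces:
multiplication is bounded from `L^{p,q} × L^{p₁,q₁}` to `L^{p₂,q₂}` when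
`1/p₂ = 1/p + 1/p₁` and `1/q₂ = 1/q + 1/q₁`. -/
theorem lorentzNorm_mul_holder {α : Type*} [MeasurableSpace α] (μ : Measure α) [SigmaFinite μ]
    (p q p₁ q₁ p₂ q₂ : ℝ≥0∞)
    (hp : 1 < p) (hp' : p ≠ ∞) (hp₁ : 1 < p₁) (hp₁' : p₁ ≠ ∞) (hp₂ : 1 < p₂) (hp₂' : p₂ ≠ ∞)
    (hq : 1 ≤ q) (hq₁ : 1 ≤ q₁) (hq₂ : 1 ≤ q₂)
    (hpc : p₂⁻¹ = p⁻¹ + p₁⁻¹) (hqc : q₂⁻¹ = q⁻¹ + q₁⁻¹) :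
    ∃ C : ℝ≥0∞, C < ∞ ∧ ∀ f g : α → ℝ,
      AEStronglyMeasurable f μ → AEStronglyMeasurable g μ →
      lorentzNorm μ p₂ q₂ (fun x => f x * g x) ≤
        C * lorentzNorm μ p q f * lorentzNorm μ p₁ q₁ g :=
  lorentzNorm_mul_holder_general μ p q p₁ q₁ p₂ q₂ hp hp₁ hq hq₁ hpc hqc
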